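/- arXiv:1808.10227 — 2 statements merged into one kernel-verified Lean document; each statement's English description precedes it below -/
import Mathlib

section
/- There exists a coloring of the edges of the Rado graph with two colors such that no induced subgraph of the Rado graph which is itself isomorphic to the Rado graph has all of its edges of the same color. Precisely: let R be a simple graph on vertex set ℕ satisfying the extension property. Then there is a function c from the unordered edges of R to {0,1} such that for every set S ⊆ ℕ for which the induced subgraph of R on S again satisfies the extension property (with respect to vertices in S), there exist edges e₁, e₂ of R with both endpoints in S such that c(e₁) = 0 and c(e₂) = 1. -/
/-- A simple graph on `ℕ` satisfies the extension property if for all disjoint finite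
sets `A, B ⊆ ℕ` there is a vertex `v ∉ A ∪ B` adjacent to every vertex of `A` and to
no vertex of `B`. -/
def ExtensionProperty (R : SimpleGraph ℕ) : Prop :=
  ∀ A B : Finset ℕ, Disjoint A B →
    ∃ v, v ∉ A ∧ v ∉ B ∧ (∀ a ∈ A, R.Adj v a) ∧ ∀ b ∈ B, ¬ R.Adj v b

/-- The induced subgraph of `R` on `S ⊆ ℕ` satisfies the extension property (with
respect to vertices in `S`). -/
def ExtensionPropertyOn (R : SimpleGraph ℕ) (S : Set ℕ) : Prop :=
  ∀ A B : Finset ℕ, ↑A ⊆ S → ↑B ⊆ S → Disjoint A B →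
    ∃ v ∈ S, v ∉ A ∧ v ∉ B ∧ (∀ a ∈ A, R.Adj v a) ∧ ∀ b ∈ B, ¬ R.Adj v b

/-!
Sierpiński's coloring. Compare vertices by the lexicographic order of their neighbourhoods
`u ↦ R.Adj u v`, and color an edge `1` exactly when this order disagrees with the order of `ℕ`
on its endpoints. Inside any `S` with the extension property, fix `x ∈ S` and extend a path
`z₀ < z₁ < ⋯` in `S` whose vertices are alternately adjacent and non-adjacent to `x`. Consecutive
neighbourhoods then differ at or below `x`, so along the path the lexicographic comparisons are
decided by the neighbourhoods truncated to `[0, x]`, which range over a finite linear order.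
The truncated neighbourhoods can therefore neither increase forever nor decrease forever, and
the path has edges of both colors.
-/

theorem Pi.toLex_restrict_lt_toLex_restrict_iff {β : Type*} [LT β] {f g : ℕ → β} {n : ℕ}
    (hn : f n ≠ g n) :
    toLex (fun i : Fin (n + 1) => f i) < toLex (fun i : Fin (n + 1) => g i) ↔
      toLex f < toLex g := by
  constructor
  · rintro ⟨i, hagree, hlt⟩
    exact ⟨i, fun j hj => hagree ⟨j, by omega⟩ hj, hlt⟩
  · rintro ⟨i, hagree, hlt⟩
    have hin : i < n + 1 := by
      by_contra! h
      exact hn (hagree n (by omega))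
    exact ⟨⟨i, hin⟩, fun j hj => hagree j hj, hlt⟩

theorem exists_seq_mem_rel_succ {α : Type*} {S : Set α} {r : α → α → Prop} {a : α} (ha : a ∈ S)
    (h : ∀ v ∈ S, ∃ w ∈ S, r v w) : ∃ z : ℕ → α, (∀ n, z n ∈ S) ∧ ∀ n, r (z n) (z (n + 1)) := by
  choose f hfS hfr using h
  let g : S → S := fun v => ⟨f v v.2, hfS v v.2⟩
  refine ⟨fun n => (g^[n] ⟨a, ha⟩ : α), fun n => (g^[n] _).2, fun n => ?_⟩
  simp only [Function.iterate_succ_apply']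
  exact hfr _ _

namespace ExtensionPropertyOn

variable {R : SimpleGraph ℕ} {S : Set ℕ}

theorem exists_gt (hS : ExtensionPropertyOn R S) {A B : Finset ℕ} (hA : ↑A ⊆ S) (hB : ↑B ⊆ S)
    (hAB : Disjoint A B) (n : ℕ) :
    ∃ v ∈ S, n < v ∧ (∀ a ∈ A, R.Adj v a) ∧ ∀ b ∈ B, ¬ R.Adj v b := by
  classical
  let C := (Finset.range (n + 1)).filter fun m => m ∈ S ∧ m ∉ A
  have hC : ↑C ⊆ S := fun m hm => (Finset.mem_filter.1 hm).2.1
  have hAC : Disjoint A C :=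
    Finset.disjoint_right.2 fun m hm => (Finset.mem_filter.1 hm).2.2
  obtain ⟨v, hvS, hvA, hvBC, hadj, hnadj⟩ :=
    hS A (B ∪ C) hA (by simpa using ⟨hB, hC⟩) (Finset.disjoint_union_right.2 ⟨hAB, hAC⟩)
  refine ⟨v, hvS, ?_, hadj, fun b hb => hnadj b (Finset.mem_union_left _ hb)⟩
  by_contra! hvn
  obtain ⟨-, hvC⟩ := Finset.notMem_union.1 hvBC
  exact hvC (Finset.mem_filter.2 ⟨Finset.mem_range.2 (by omega), hvS, hvA⟩)

theorem exists_adj_gt_adj_iff_not_adj (hS : ExtensionPropertyOn R S) {x : ℕ} (hx : x ∈ S) :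
    ∀ v ∈ S, ∃ w ∈ S, v < w ∧ R.Adj v w ∧ (R.Adj x v ↔ ¬ R.Adj x w) := by
  intro v hv
  by_cases hxv : R.Adj x v
  · obtain ⟨w, hwS, hvw, hA, hB⟩ := hS.exists_gt (A := {v}) (B := {x}) (by simpa using hv)
      (by simpa using hx) (Finset.disjoint_singleton.2 hxv.ne.symm) v
    have hxw : ¬ R.Adj x w := fun h => hB x (Finset.mem_singleton_self x) h.symm
    exact ⟨w, hwS, hvw, (hA v (Finset.mem_singleton_self v)).symm, iff_of_true hxv hxw⟩
  · obtain ⟨w, hwS, hvw, hA, -⟩ := hS.exists_gt (A := {v, x}) (B := ∅)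
      (by simp [Set.insert_subset_iff, hv, hx]) (by simp) (by simp) v
    have hxw : R.Adj x w := (hA x (by simp)).symm
    exact ⟨w, hwS, hvw, (hA v (by simp)).symm, iff_of_false hxv (not_not_intro hxw)⟩

end ExtensionPropertyOn

open Classical in
noncomputable def adjPattern (R : SimpleGraph ℕ) (v : ℕ) : Lex (ℕ → Bool) :=
  toLex fun u => decide (R.Adj u v)

noncomputable def adjPatternUpTo (R : SimpleGraph ℕ) (x v : ℕ) : Lex (Fin (x + 1) → Bool) :=
  toLex fun i => adjPattern R v i

open Classical in
noncomputable def sierpinskiColoring (R : SimpleGraph ℕ) : Sym2 ℕ → Fin 2 :=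
  Sym2.lift ⟨fun a b => if adjPattern R (max a b) < adjPattern R (min a b) then 1 else 0,
    fun a b => by simp only [min_comm, max_comm]⟩

variable {R : SimpleGraph ℕ}

theorem adjPatternUpTo_lt_adjPatternUpTo_iff {x a b : ℕ} (hx : R.Adj x a ↔ ¬ R.Adj x b) :
    adjPatternUpTo R x a < adjPatternUpTo R x b ↔ adjPattern R a < adjPattern R b :=
  Pi.toLex_restrict_lt_toLex_restrict_iff (by simp [adjPattern, hx])

open Classical in
theorem sierpinskiColoring_mk_of_lt {x a b : ℕ} (hab : a < b) (hx : R.Adj x a ↔ ¬ R.Adj x b) :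
    sierpinskiColoring R s(a, b) =
      if adjPatternUpTo R x b < adjPatternUpTo R x a then 1 else 0 := by
  rw [adjPatternUpTo_lt_adjPatternUpTo_iff (by tauto)]
  simp [sierpinskiColoring, min_eq_left hab.le, max_eq_right hab.le]

theorem exists_sierpinskiColoring_eq_of_path {z : ℕ → ℕ} {x : ℕ} (hz : ∀ n, z n < z (n + 1))
    (hx : ∀ n, R.Adj x (z n) ↔ ¬ R.Adj x (z (n + 1))) (i : Fin 2) :
    ∃ n, sierpinskiColoring R s(z n, z (n + 1)) = i := by
  let t n := adjPatternUpTo R x (z n)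
  have hcolor n := sierpinskiColoring_mk_of_lt (hz n) (hx n)
  fin_cases i
  · obtain ⟨n, hn⟩ := WellFounded.not_rel_apply_succ (r := (· < ·)) t
    exact ⟨n, (hcolor n).trans (if_neg hn)⟩
  · obtain ⟨n, hn⟩ := WellFounded.not_rel_apply_succ (r := (· > ·)) t
    have hne : t n ≠ t (n + 1) := fun h => by
      simpa [t, adjPatternUpTo, adjPattern, hx n] using congrFun h (Fin.last x)
    exact ⟨n, (hcolor n).trans (if_pos ((not_lt.1 hn).lt_of_ne' hne))⟩

theorem rado_not_edge_ramsey_general (R : SimpleGraph ℕ) :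
    ∃ c : Sym2 ℕ → Fin 2,
      ∀ S : Set ℕ, ExtensionPropertyOn R S →
        ∃ e₁ ∈ R.edgeSet, ∃ e₂ ∈ R.edgeSet,
          (∀ v ∈ e₁, v ∈ S) ∧ (∀ v ∈ e₂, v ∈ S) ∧ c e₁ = 0 ∧ c e₂ = 1 := by
  refine ⟨sierpinskiColoring R, fun S hS => ?_⟩
  obtain ⟨x, hxS, -⟩ := hS ∅ ∅ (by simp) (by simp) (by simp)
  obtain ⟨z, hzS, hz⟩ := exists_seq_mem_rel_succ hxS (hS.exists_adj_gt_adj_iff_not_adj hxS)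
  have hedge n : s(z n, z (n + 1)) ∈ R.edgeSet := (hz n).2.1
  have hmem n : ∀ v ∈ s(z n, z (n + 1)), v ∈ S := by simp [hzS]
  have hcolors := exists_sierpinskiColoring_eq_of_path (fun n => (hz n).1) (fun n => (hz n).2.2)
  obtain ⟨m, hm⟩ := hcolors 0
  obtain ⟨k, hk⟩ := hcolors 1
  exact ⟨_, hedge m, _, hedge k, hmem m, hmem k, hm, hk⟩

/-- There is a 2-coloring of the edges of the Rado graph such that every induced
subgraph which is again a Rado graph (i.e. satisfies the extension property) contains
edges of both colors. -/
theorem rado_not_edge_ramsey (R : SimpleGraph ℕ) (hR : ExtensionProperty R) :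
    ∃ c : Sym2 ℕ → Fin 2,
      ∀ S : Set ℕ, ExtensionPropertyOn R S →
        ∃ e₁ ∈ R.edgeSet, ∃ e₂ ∈ R.edgeSet,
          (∀ v ∈ e₁, v ∈ S) ∧ (∀ v ∈ e₂, v ∈ S) ∧ c e₁ = 0 ∧ c e₂ = 1 :=
  rado_not_edge_ramsey_general R
end

section
/- The Halpern–Läuchli theorem (strong tree version, level products, for the binary tree): for every d ≥ 1, every r ≥ 1, and every coloring c of the set ⋃_{n ∈ ℕ} (2ⁿ)ᵈ of d-tuples of binary sequences of equal length into r colors, there exist an infinite set A ⊆ ℕ and strong subtrees S₁, …, S_d of 2^{<ω}, each with level set A, such that c is constant on the set ⋃_{a ∈ A} (S₁ ∩ 2ᵃ) × ⋯ × (S_d ∩ 2ᵃ) of d-tuples whose coordinates lie in the respective subtrees at a common level a ∈ A. -/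
/-!
Code a `d`-tuple of binary sequences of a common length as one word over the alphabet
`Fin d → Bool`. A Carlson–Simpson type theorem yields a stem and blocks `x :: t q (x)`, each a
variable word beginning with its variable, such that all words
`stem ++ B₀(σ₀) ++ ⋯ ++ B_{q-1}(σ_{q-1})` have the same color. Projected to the `d`
coordinates, these words are exactly the level products of `d` strong subtrees with the
common level set `{|stem ++ B₀ ++ ⋯ ++ B_{q-1}| : q ∈ ℕ}`.

The Carlson–Simpson theorem comes from an idempotent ultrafilter on words each of whose members
contains a variable word together with its constant prefix. Such ultrafilters exist because this
property is partition regular; that in turn follows from Hales–Jewett by a pigeonhole argument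
along a chain of variable words, each chosen insensitive to all later continuations.
-/

/-- `S ⊆ 2^{<ω}` (nodes coded as `List Bool`, ordered by end-extension, i.e. the
prefix order) is a strong subtree of the binary tree with level set `A ⊆ ℕ`:
(i) every node of `S` has length in `A`, and every length in `A` is realized in `S`;
(ii) `S` has a unique node of minimal length (the stem);
(iii) for every `s ∈ S` and every `a' ∈ A` which is the least element of `A` greater
than `|s|`, and each direction `i : Bool`, there is exactly one node of `S` of length
`a'` end-extending `s ++ [i]`;
(iv) every non-minimal node of `S` arises this way: it end-extends `s ++ [i]` for
some `s ∈ S` with no level of `A` strictly between `|s|` and its own length. -/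
def IsStrongSubtree (S : Set (List Bool)) (A : Set ℕ) : Prop :=
  (∀ s ∈ S, s.length ∈ A) ∧
  (∀ a ∈ A, ∃ s ∈ S, s.length = a) ∧
  (∃! s, s ∈ S ∧ ∀ t ∈ S, s.length ≤ t.length) ∧
  (∀ s ∈ S, ∀ a' ∈ A, s.length < a' → (∀ b ∈ A, s.length < b → a' ≤ b) →
    ∀ i : Bool, ∃! t, t ∈ S ∧ t.length = a' ∧ (s ++ [i]) <+: t) ∧
  (∀ t ∈ S, (∃ u ∈ S, u.length < t.length) →
    ∃ s ∈ S, ∃ i : Bool, (s ++ [i]) <+: t ∧ s.length < t.length ∧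
      ∀ b ∈ A, s.length < b → t.length ≤ b)

namespace HalpernLauchli

open List

variable {α : Type*}

def subst (w : List (Option α)) (x : α) : List α := w.map (·.getD x)

@[simp] lemma subst_cons (o : Option α) (w : List (Option α)) (x : α) :
    subst (o :: w) x = o.getD x :: subst w x := rfl

@[simp] lemma subst_append (w w' : List (Option α)) (x : α) :
    subst (w ++ w') x = subst w x ++ subst w' x := map_append ..

@[simp] lemma subst_map_some (u : List α) (x : α) : subst (u.map some) x = u := by
  simp [subst]

@[simp] lemma length_subst (w : List (Option α)) (x : α) : (subst w x).length = w.length :=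
  length_map ..

lemma map_subst {β : Type*} (f : α → β) (w : List (Option α)) (x : α) :
    (subst w x).map f = subst (w.map (Option.map f)) (f x) := by
  simp only [subst, map_map]
  congr 1
  funext o
  cases o <;> rfl

/-- A variable word `pre ++ [v] ++ tail` in the letters `α` and the variable `v`, split at the
first occurrence of `v`; `tail` may contain further occurrences, coded as `none`. -/
structure VarWord (α : Type*) where
  pre : List α
  tail : List (Option α)

namespace VarWord

def eval (v : VarWord α) (x : α) : List α := v.pre ++ x :: subst v.tail x

def length (v : VarWord α) : ℕ := v.pre.length + v.tail.length + 1

@[simp] lemma length_eval (v : VarWord α) (x : α) : (v.eval x).length = v.length := by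
  simp [eval, length]; omega

lemma exists_eval_eq_subst (u : List (Option α)) (h : none ∈ u) :
    ∃ v : VarWord α, v.length = u.length ∧ ∀ x, v.eval x = subst u x := by
  induction u with
  | nil => simp at h
  | cons o u ih =>
    cases o with
    | none => exact ⟨⟨[], u⟩, by simp [length], fun x => rfl⟩
    | some a =>
      obtain ⟨v, hlen, hv⟩ := ih (by simpa using h)
      refine ⟨⟨a :: v.pre, v.tail⟩, by simp [length] at hlen ⊢; omega, fun x => ?_⟩
      simp [← hv, eval]

end VarWord

section HalesJewett

variable (α) [Finite α]

theorem exists_varWord_isMono (K : Type*) [Finite K] :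
    ∃ N, ∀ κ : List α → K, ∃ v : VarWord α,
      v.length ≤ N ∧ ∀ x y, κ (v.eval x) = κ (v.eval y) := by
  obtain ⟨ι, _, hι⟩ := Combinatorics.Line.exists_mono_in_high_dimension α K
  let e := Fintype.equivFin ι
  refine ⟨Fintype.card ι, fun κ => ?_⟩
  obtain ⟨l, k, hl⟩ := hι fun f => κ (ofFn (f ∘ e.symm))
  obtain ⟨i, hi⟩ := l.proper
  obtain ⟨v, hlen, hv⟩ := VarWord.exists_eval_eq_subst (ofFn (l.idxFun ∘ e.symm))
    (mem_ofFn.2 ⟨e i, by simpa using hi⟩)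
  have hpoint : ∀ x, κ (v.eval x) = k := fun x => by
    rw [hv, subst, map_ofFn, ← hl x]
    rfl
  exact ⟨v, by simp [hlen], fun x y => (hpoint x).trans (hpoint y).symm⟩

noncomputable def hjBound (K : Type*) [Finite K] : ℕ := (exists_varWord_isMono α K).choose

end HalesJewett

section Focusing

variable (α) [Finite α]

def Palette (K : Type*) (M : ℕ) : Type _ := {z : List α // z.length ≤ M} → K

instance (K : Type*) [Finite K] (M : ℕ) : Finite (Palette α K M) :=
  have : Finite {z : List α // z.length ≤ M} := (finite_length_le α M).to_subtype
  Pi.finite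

variable {α}

lemma exists_varWord_isMono_between {K : Type*} [Finite K] (M : ℕ) (κ : List α → K)
    (y : List α) :
    ∃ v : VarWord α, v.length ≤ hjBound α (Palette α K M) ∧
      ∀ x x' z, z.length ≤ M → κ (y ++ v.eval x ++ z) = κ (y ++ v.eval x' ++ z) := by
  obtain ⟨v, hlen, hv⟩ := (exists_varWord_isMono α (Palette α K M)).choose_spec
    fun u (z : {z : List α // z.length ≤ M}) => κ (y ++ u ++ z)
  exact ⟨v, hlen, fun x x' z hz => congrFun (hv x x') ⟨z, hz⟩⟩

variable (α) in
/-- `budget K t` bounds the total length of the last `t` steps of `chain`: step `i` is chosen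
insensitive to continuations of length `budget K (card K - i)`. -/
noncomputable def budget (K : Type*) [Finite K] : ℕ → ℕ
  | 0 => 0
  | t + 1 => hjBound α (Palette α K (budget K t)) + budget K t

variable [Nonempty α] {K : Type*} [Fintype K] (κ : List α → K)

noncomputable def chainStep (i : ℕ) (y : List α) : VarWord α :=
  (exists_varWord_isMono_between (budget α K (Fintype.card K - i)) κ y).choose

noncomputable def chain : ℕ → List α
  | 0 => []
  | i + 1 => chain i ++ (chainStep κ i (chain i)).eval (Classical.arbitrary α)

lemma chain_prefix {i j : ℕ} (h : i ≤ j) : chain κ i <+: chain κ j := by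
  induction h with
  | refl => exact prefix_refl _
  | step _ ih => exact ih.trans (prefix_append _ _)

lemma length_chain_add_le {i j : ℕ} (hij : i < j) (hj : j ≤ Fintype.card K) :
    (chain κ j).length + (chainStep κ j (chain κ j)).length ≤
      (chain κ (i + 1)).length + budget α K (Fintype.card K - i) := by
  set n := Fintype.card K
  set F : ℕ → ℕ := fun k => budget α K (n - k)
  have hF : ∀ k < n, F k = hjBound α (Palette α K (F (k + 1))) + F (k + 1) := fun k hk => by
    simp only [F, show n - k = n - (k + 1) + 1 by omega, budget]
  have hstep : ∀ k, (chainStep κ k (chain κ k)).length ≤ hjBound α (Palette α K (F k)) :=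
    fun k => (exists_varWord_isMono_between _ κ _).choose_spec.1
  have hdescent : ∀ m, i + 1 + m ≤ n →
      (chain κ (i + 1 + m)).length + F (i + m) ≤ (chain κ (i + 1)).length + F i := by
    intro m
    induction m with
    | zero => simp
    | succ m ih =>
      intro hm
      have := hF (i + m) (by omega)
      have := hstep (i + 1 + m)
      simp only [← add_assoc, chain, length_append, VarWord.length_eval] at ih ⊢
      grind
  obtain ⟨m, rfl⟩ := Nat.exists_eq_add_of_lt hij
  have := hdescent m (by omega)
  have := hF (i + m) (by omega)
  have := hstep (i + m + 1)
  grind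

theorem exists_varWord_color_eq_pre : ∃ v : VarWord α, ∀ x, κ (v.eval x) = κ v.pre := by
  let step (i : ℕ) : VarWord α := chainStep κ i (chain κ i)
  obtain ⟨i, j, hij, hjn, hcolor⟩ : ∃ i j : ℕ, i < j ∧ j ≤ Fintype.card K ∧
      κ (chain κ i ++ (step i).pre) = κ (chain κ j ++ (step j).pre) := by
    obtain ⟨i, j, hne, heq⟩ := Fintype.exists_ne_map_eq_of_card_lt
      (fun i : Fin (Fintype.card K + 1) => κ (chain κ i ++ (step i).pre)) (by simp)
    rcases Fin.lt_or_lt_of_ne hne with h | h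
    · exact ⟨i, j, h, Nat.lt_succ_iff.1 j.2, heq⟩
    · exact ⟨j, i, h, Nat.lt_succ_iff.1 i.2, heq.symm⟩
  obtain ⟨gap, hgap⟩ := chain_prefix κ (show i + 1 ≤ j by omega)
  set z := gap ++ (step j).pre
  have hz : z.length ≤ budget α K (Fintype.card K - i) := by
    have := length_chain_add_le κ hij hjn
    have : (step j).pre.length ≤ (chainStep κ j (chain κ j)).length := by
      simp only [step, VarWord.length]; omega
    have := congrArg List.length hgap
    simp only [length_append, z] at *
    omega
  -- Step `i` ignores the substituted letter under the continuation `z`, and with the filler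
  -- letter it continues to `chain j ++ (step j).pre`, whose color is that of `chain i ++ pre`.
  refine ⟨⟨chain κ i ++ (step i).pre, (step i).tail ++ z.map some⟩, fun x => ?_⟩
  calc κ (VarWord.eval ⟨chain κ i ++ (step i).pre, (step i).tail ++ z.map some⟩ x)
      = κ (chain κ i ++ (step i).eval x ++ z) := by simp [VarWord.eval]
    _ = κ (chain κ i ++ (step i).eval (Classical.arbitrary α) ++ z) :=
      (exists_varWord_isMono_between _ κ _).choose_spec.2 _ _ _ hz
    _ = κ (chain κ j ++ (step j).pre) := by rw [← hgap]; simp [chain, z, step]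
    _ = κ (chain κ i ++ (step i).pre) := hcolor.symm

end Focusing

section Ultrafilters

def HasVarWord (A : Set (List α)) : Prop :=
  ∃ v : VarWord α, v.pre ∈ A ∧ ∀ x, v.eval x ∈ A

lemma HasVarWord.mono {A B : Set (List α)} (h : HasVarWord A) (hAB : A ⊆ B) : HasVarWord B :=
  let ⟨v, hpre, heval⟩ := h
  ⟨v, hAB hpre, fun x => hAB (heval x)⟩

theorem exists_hasVarWord_fiber [Finite α] [Nonempty α] {ι : Type*} [Finite ι]
    (f : List α → ι) : ∃ i, HasVarWord (f ⁻¹' {i}) := by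
  have := Fintype.ofFinite ι
  obtain ⟨v, hv⟩ := exists_varWord_color_eq_pre f
  exact ⟨f v.pre, v, rfl, hv⟩

@[reducible] def appendSemigroup : Semigroup (List α) where
  mul := (· ++ ·)
  mul_assoc := append_assoc

attribute [local instance] appendSemigroup Ultrafilter.mul Ultrafilter.semigroup

variable (α) in
def varWordUltrafilters : Set (Ultrafilter (List α)) := {ν | ∀ A ∈ ν, HasVarWord A}

lemma isClosed_varWordUltrafilters : IsClosed (varWordUltrafilters α) := by
  have : varWordUltrafilters α = ⋂ A ∈ {A | ¬ HasVarWord A}, {ν | A ∈ ν}ᶜ := by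
    ext ν
    simp only [varWordUltrafilters, Set.mem_iInter, Set.mem_ofPred_eq, Set.mem_compl_iff]
    exact forall_congr' fun A => not_imp_not.symm
  rw [this]
  exact isClosed_biInter fun A _ => (ultrafilter_isOpen_basic A).isClosed_compl

lemma mul_mem_varWordUltrafilters (U : Ultrafilter (List α)) {V : Ultrafilter (List α)}
    (hV : V ∈ varWordUltrafilters α) : U * V ∈ varWordUltrafilters α := by
  intro A hA
  obtain ⟨a, ha⟩ :=
    Ultrafilter.nonempty_of_mem ((Ultrafilter.eventually_mul U V (· ∈ A)).1 hA)
  obtain ⟨v, hpre, heval⟩ := hV _ ha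
  refine ⟨⟨a ++ v.pre, v.tail⟩, hpre, fun x => ?_⟩
  rw [VarWord.eval, append_assoc]
  exact heval x

variable [Finite α] [Nonempty α]

lemma varWordUltrafilters_nonempty : (varWordUltrafilters α).Nonempty := by
  let 𝒜 : Set (Set (List α)) := {B | ¬ HasVarWord Bᶜ}
  have : (Filter.generate 𝒜).NeBot := by
    rw [Filter.generate_neBot_iff]
    intro t ht htfin
    by_contra hempty
    have hmiss : ∀ w, ∃ B : t, w ∉ (B : Set (List α)) := by
      intro w
      by_contra! h
      exact hempty ⟨w, Set.mem_sInter.2 fun B hB => h ⟨B, hB⟩⟩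
    choose f hf using hmiss
    have := htfin.to_subtype
    obtain ⟨B, hB⟩ := exists_hasVarWord_fiber f
    exact ht B.2 (hB.mono fun w (hw : f w = B) => hw ▸ hf w)
  obtain ⟨ν, hν⟩ := Ultrafilter.exists_le (Filter.generate 𝒜)
  refine ⟨ν, fun A hA => by_contra fun h => ?_⟩
  exact ν.compl_notMem_iff.2 hA (hν (Filter.mem_generate_of_mem (by simpa [𝒜] using h)))

/-- The second conjunct is `ν * ν = ν` for the product induced by concatenation. -/
theorem exists_ultrafilter_hasVarWord_idempotent : ∃ ν : Ultrafilter (List α),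
    (∀ A ∈ ν, HasVarWord A) ∧ ∀ C ∈ ν, {x | (x ++ ·) ⁻¹' C ∈ ν} ∈ ν := by
  obtain ⟨ν, hν, hidem⟩ := exists_idempotent_in_compact_subsemigroup
    Ultrafilter.continuous_mul_left _ (varWordUltrafilters_nonempty (α := α))
    isClosed_varWordUltrafilters.isCompact fun U _ _ hV => mul_mem_varWordUltrafilters U hV
  refine ⟨ν, hν, fun C hC => ?_⟩
  rw [← hidem] at hC
  exact (Ultrafilter.eventually_mul ν ν (· ∈ C)).1 hC

end Ultrafilters

section Recurrence

def recurrentPart (ν : Ultrafilter (List α)) (C : Set (List α)) : Set (List α) :=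
  {x ∈ C | (x ++ ·) ⁻¹' C ∈ ν}

variable {ν : Ultrafilter (List α)} {C : Set (List α)}

lemma recurrentPart_mem (hν : ∀ D ∈ ν, {x | (x ++ ·) ⁻¹' D ∈ ν} ∈ ν) (hC : C ∈ ν) :
    recurrentPart ν C ∈ ν :=
  Filter.inter_mem hC (hν C hC)

lemma preimage_recurrentPart_mem (hν : ∀ D ∈ ν, {x | (x ++ ·) ⁻¹' D ∈ ν} ∈ ν) {x : List α}
    (hx : x ∈ recurrentPart ν C) : (x ++ ·) ⁻¹' recurrentPart ν C ∈ ν := by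
  filter_upwards [hx.2, hν _ hx.2] with y hy hy'
  exact ⟨hy, by simpa [Set.preimage, append_assoc] using hy'⟩

end Recurrence

def realize (stem : List α) (t : ℕ → List (Option α)) (σ : ℕ → α) : ℕ → List α
  | 0 => stem
  | q + 1 => realize stem t σ q ++ σ q :: subst (t q) (σ q)

section CarlsonSimpson

variable (next : ((ℕ → α) → List α) → VarWord α)

def front : ℕ → (ℕ → α) → List α
  | 0, _ => []
  | q + 1, σ => front q σ ++ (next (front q)).eval (σ q)

lemma finite_range_front [Finite α] (q : ℕ) : (Set.range (front next q)).Finite := by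
  induction q with
  | zero => exact (Set.finite_singleton []).subset (Set.range_subset_iff.2 fun _ => rfl)
  | succ q ih =>
    refine (ih.image2 (· ++ ·) (Set.finite_range (next (front next q)).eval)).subset ?_
    rintro _ ⟨σ, rfl⟩
    exact Set.mem_image2_of_mem ⟨σ, rfl⟩ ⟨σ q, rfl⟩

lemma realize_eq_front (σ : ℕ → α) (q : ℕ) :
    realize (next (front next 0)).pre
        (fun q => (next (front next q)).tail ++ (next (front next (q + 1))).pre.map some) σ q =
      front next q σ ++ (next (front next q)).pre := by
  induction q with
  | zero => rfl
  | succ q ih =>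
    rw [realize, ih]
    simp [front, VarWord.eval]

end CarlsonSimpson

theorem exists_realize_color_eq [Finite α] [Nonempty α] {K : Type*} [Finite K]
    (γ : List α → K) :
    ∃ (stem : List α) (t : ℕ → List (Option α)) (k : K),
      ∀ q σ, γ (realize stem t σ q) = k := by
  obtain ⟨ν, hgood, hν⟩ := exists_ultrafilter_hasVarWord_idempotent (α := α)
  obtain ⟨k, hk⟩ := (ν.map γ).eq_pure_of_finite
  have hcolor : γ ⁻¹' {k} ∈ ν := by
    rw [← Ultrafilter.mem_map, hk]
    exact Ultrafilter.mem_pure.2 rfl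
  set C := recurrentPart ν (γ ⁻¹' {k})
  have : Nonempty (VarWord α) := ⟨⟨[], []⟩⟩
  choose! pick hpick using hgood
  -- Each variable word is picked among the continuations keeping all words built so far in `C`;
  -- as there are finitely many such words, recurrence of `C` keeps these continuations in `ν`.
  let next (Y : (ℕ → α) → List α) : VarWord α := pick {z | ∀ σ, Y σ ++ z ∈ C}
  have hnext : ∀ q, {z | ∀ σ, front next q σ ++ z ∈ C} ∈ ν := by
    intro q
    induction q with
    | zero => simpa [front] using recurrentPart_mem hν hcolor
    | succ q ih =>
      have hmem : ∀ σ, front next (q + 1) σ ∈ C := fun σ => (hpick _ ih).2 (σ q) σ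
      have : ⋂ y ∈ Set.range (front next (q + 1)), (y ++ ·) ⁻¹' C ∈ ν :=
        (Filter.biInter_mem (finite_range_front next (q + 1))).2
        (Set.forall_mem_range.2 fun σ => preimage_recurrentPart_mem hν (hmem σ))
      filter_upwards [this] with z hz σ
      exact Set.mem_iInter₂.1 hz _ ⟨σ, rfl⟩
  refine ⟨(next (front next 0)).pre,
    fun q => (next (front next q)).tail ++ (next (front next (q + 1))).pre.map some, k,
    fun q σ => ?_⟩
  rw [realize_eq_front]
  exact ((hpick _ (hnext q)).1 σ).1

section Realize

variable (stem : List α) (t : ℕ → List (Option α))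

def levels (q : ℕ) : ℕ := stem.length + ∑ i ∈ Finset.range q, ((t i).length + 1)

@[simp] lemma levels_zero : levels stem t 0 = stem.length := by simp [levels]

lemma levels_succ (q : ℕ) : levels stem t (q + 1) = levels stem t q + (t q).length + 1 := by
  simp [levels, Finset.sum_range_succ, add_assoc]

lemma strictMono_levels : StrictMono (levels stem t) :=
  strictMono_nat_of_lt_succ fun q => by rw [levels_succ]; omega

lemma levels_map {β : Type*} (f : α → β) :
    levels (stem.map f) (fun q => (t q).map (Option.map f)) = levels stem t := by
  funext q
  simp [levels]

variable {stem t}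

@[simp] lemma length_realize (σ : ℕ → α) (q : ℕ) :
    (realize stem t σ q).length = levels stem t q := by
  induction q with
  | zero => simp [realize]
  | succ q ih => simp [realize, ih, levels_succ, add_assoc]

lemma map_realize {β : Type*} (f : α → β) (σ : ℕ → α) (q : ℕ) :
    (realize stem t σ q).map f =
      realize (stem.map f) (fun q => (t q).map (Option.map f)) (f ∘ σ) q := by
  induction q with
  | zero => rfl
  | succ q ih => simp [realize, ih, map_subst]

lemma realize_congr {σ τ : ℕ → α} {q : ℕ} (h : ∀ i < q, σ i = τ i) :
    realize stem t σ q = realize stem t τ q := by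
  induction q with
  | zero => rfl
  | succ q ih =>
    rw [realize, realize, ih fun i hi => h i (by omega), h q (by omega)]

lemma realize_append_singleton_prefix (σ : ℕ → α) (q : ℕ) :
    realize stem t σ q ++ [σ q] <+: realize stem t σ (q + 1) :=
  ⟨subst (t q) (σ q), by simp [realize]⟩

lemma realize_succ_eq_of_prefix {σ τ : ℕ → α} {q : ℕ} {x : α}
    (h : realize stem t σ q ++ [x] <+: realize stem t τ (q + 1)) :
    realize stem t τ (q + 1) = realize stem t (Function.update σ q x) (q + 1) := by
  have hpred : realize stem t σ q = realize stem t τ q :=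
    (prefix_of_prefix_length_le ((prefix_append _ _).trans h)
      ((prefix_append _ _).trans (realize_append_singleton_prefix τ q))
      (by simp)).eq_of_length (by simp)
  rw [hpred, realize, prefix_append_right_inj, cons_prefix_cons] at h
  rw [realize, realize, h.1, ← hpred, Function.update_self]
  congr 1
  exact realize_congr fun i hi => (Function.update_of_ne hi.ne _ _).symm

end Realize

def realizeTree (stem : List α) (t : ℕ → List (Option α)) : Set (List α) :=
  {s | ∃ q σ, realize stem t σ q = s}

theorem isStrongSubtree_realizeTree (stem : List Bool) (t : ℕ → List (Option Bool)) :
    IsStrongSubtree (realizeTree stem t) (Set.range (levels stem t)) := by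
  have hmono := strictMono_levels stem t
  refine ⟨?_, ?_, ?_, ?_, ?_⟩
  · rintro _ ⟨q, σ, rfl⟩
    exact ⟨q, (length_realize σ q).symm⟩
  · rintro _ ⟨q, rfl⟩
    exact ⟨_, ⟨q, fun _ => false, rfl⟩, length_realize _ q⟩
  · refine ⟨stem, ⟨⟨0, fun _ => false, rfl⟩, ?_⟩, ?_⟩
    · rintro _ ⟨q, σ, rfl⟩
      simpa using hmono.monotone q.zero_le
    · rintro _ ⟨⟨q, σ, rfl⟩, hmin⟩
      have hq : levels stem t q ≤ levels stem t 0 := by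
        simpa using hmin stem ⟨0, fun _ => false, rfl⟩
      obtain rfl : q = 0 := Nat.le_zero.1 (hmono.le_iff_le.1 hq)
      rfl
  · rintro _ ⟨q, σ, rfl⟩ _ ⟨m, rfl⟩ hlt hleast i
    rw [length_realize] at hlt hleast
    obtain rfl : m = q + 1 := le_antisymm
      (hmono.le_iff_le.1 (hleast _ ⟨q + 1, rfl⟩ (hmono q.lt_succ_self)))
      (hmono.lt_iff_lt.1 hlt)
    refine ⟨realize stem t (Function.update σ q i) (q + 1),
      ⟨⟨q + 1, _, rfl⟩, by simp, ?_⟩, ?_⟩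
    · have := realize_append_singleton_prefix (stem := stem) (t := t) (Function.update σ q i) q
      rwa [Function.update_self,
        realize_congr fun j hj => Function.update_of_ne hj.ne _ _] at this
    · rintro _ ⟨⟨m, τ, rfl⟩, hlen, hpre⟩
      obtain rfl : m = q + 1 := hmono.injective (by simpa using hlen)
      exact realize_succ_eq_of_prefix hpre
  · rintro _ ⟨m, σ, rfl⟩ ⟨_, ⟨n, τ, rfl⟩, hlt⟩
    simp only [length_realize, hmono.lt_iff_lt] at hlt
    obtain ⟨q, rfl⟩ := Nat.exists_eq_succ_of_ne_zero (by omega : m ≠ 0)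
    refine ⟨realize stem t σ q, ⟨q, σ, rfl⟩, σ q, realize_append_singleton_prefix σ q,
      by simpa using hmono q.lt_succ_self, ?_⟩
    rintro _ ⟨n, rfl⟩ hn
    simp only [length_realize, hmono.lt_iff_lt] at hn ⊢
    exact hmono.monotone hn

end HalpernLauchli

open HalpernLauchli

theorem halpern_lauchli_general (d r : ℕ)
    (c : (Fin d → List Bool) → Fin r) :
    ∃ A : Set ℕ, A.Infinite ∧
      ∃ S : Fin d → Set (List Bool),
        (∀ j : Fin d, IsStrongSubtree (S j) A) ∧
        ∃ k : Fin r, ∀ x : Fin d → List Bool,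
          (∀ j : Fin d, x j ∈ S j) →
          (∃ a ∈ A, ∀ j : Fin d, (x j).length = a) →
          c x = k := by
  obtain ⟨stem, t, k, hk⟩ := exists_realize_color_eq fun w : List (Fin d → Bool) =>
    c fun j => w.map (· j)
  let stemAt (j : Fin d) := stem.map (· j)
  let tAt (j : Fin d) (q : ℕ) := (t q).map (Option.map (· j))
  have hlevels (j : Fin d) : levels (stemAt j) (tAt j) = levels stem t := levels_map stem t _
  refine ⟨Set.range (levels stem t), Set.infinite_range_of_injective
    (strictMono_levels stem t).injective, fun j => realizeTree (stemAt j) (tAt j),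
    fun j => hlevels j ▸ isStrongSubtree_realizeTree _ _, k, ?_⟩
  rintro x hx ⟨_, ⟨q, rfl⟩, hlen⟩
  choose m σ hσ using hx
  have hm (j : Fin d) : m j = q := by
    apply (strictMono_levels stem t).injective
    rw [← hlen j, ← hσ j, length_realize, hlevels]
  have hx : x = fun j => (realize stem t (fun i j => σ j i) q).map (· j) := by
    funext j
    rw [map_realize, ← hσ j, hm j]
    rfl
  rw [hx]
  exact hk q _

/-- The Halpern–Läuchli theorem (strong tree version, level products, binary trees):
for every `d ≥ 1`, `r ≥ 1` and every `r`-coloring of `d`-tuples of binary sequences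
(in particular of those of equal length), there are an infinite `A ⊆ ℕ` and strong
subtrees `S 0, …, S (d-1)` of `2^{<ω}`, each with level set `A`, such that the
coloring is constant on tuples whose coordinates lie in the respective subtrees at a
common level `a ∈ A`. -/
theorem halpern_lauchli (d r : ℕ) (hd : 1 ≤ d) (hr : 1 ≤ r)
    (c : (Fin d → List Bool) → Fin r) :
    ∃ A : Set ℕ, A.Infinite ∧
      ∃ S : Fin d → Set (List Bool),
        (∀ j : Fin d, IsStrongSubtree (S j) A) ∧
        ∃ k : Fin r, ∀ x : Fin d → List Bool,
          (∀ j : Fin d, x j ∈ S j) →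
          (∃ a ∈ A, ∀ j : Fin d, (x j).length = a) →
          c x = k :=
  halpern_lauchli_general d r c
end
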